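/- arXiv:2112.03746 — 6 statements merged into one kernel-verified Lean document; each statement's English description precedes it below -/
import Mathlib

section
/- Let A be a 1QFAC over a finite alphabet Σ with classical state set S and n quantum basis states that recognizes a language L ⊆ Σ* with cut-point λ isolated by ε. For s ∈ S let A_s = {w ∈ Σ* : s_w = s}. Then for every s ∈ S, the number of equivalence classes into which A_s is partitioned by the Myhill–Nerode equivalence ≡_L is at most (1 + 2/ε)^{2n}. -/
noncomputable section

/-- The `n`-dimensional complex Hilbert space `ℂⁿ`. -/
abbrev QState (n : ℕ) := EuclideanSpace ℂ (Fin n)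

/-- Apply a matrix to a vector of `ℂⁿ`. -/
def mApply {n : ℕ} (M : Matrix (Fin n) (Fin n) ℂ) (v : QState n) : QState n :=
  Matrix.toEuclideanLin M v

/-- Myhill–Nerode equivalence: `x ≡_L y` iff `∀ z, xz ∈ L ↔ yz ∈ L`. -/
def mnEquiv {α : Type} (L : Set (List α)) (x y : List α) : Prop :=
  ∀ z : List α, x ++ z ∈ L ↔ y ++ z ∈ L

/-- Myhill–Nerode equivalence as a setoid. -/
def mnSetoid {α : Type} (L : Set (List α)) : Setoid (List α) where
  r := mnEquiv L
  iseqv := ⟨fun _ _ => Iff.rfl, fun h z => (h z).symm, fun h1 h2 z => (h1 z).trans (h2 z)⟩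

/-- A 1QFAC: classical states `S` with initial state and transitions, an `n`-dimensional
quantum part with a unit initial vector, a unitary for each (classical state, letter),
and an orthogonal projection (accepting measurement) for each classical state. -/
structure QFAC (Alph : Type) (S : Type) (n : ℕ) where
  s0 : S
  tr : S → Alph → S
  ψ0 : QState n
  ψ0_unit : ‖ψ0‖ = 1
  U : S → Alph → Matrix (Fin n) (Fin n) ℂ
  U_unitary : ∀ s σ, U s σ ∈ Matrix.unitaryGroup (Fin n) ℂ
  P : S → Matrix (Fin n) (Fin n) ℂ
  P_proj : ∀ s, (P s).conjTranspose = P s ∧ P s * P s = P s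

namespace QFAC
variable {Alph S : Type} {n : ℕ}

/-- `s_x`: the classical state reached after reading `x`. -/
def sState (A : QFAC Alph S n) (x : List Alph) : S := x.foldl A.tr A.s0

/-- `|ψ_x⟩`: the final quantum state after reading `x`. -/
def qState (A : QFAC Alph S n) (x : List Alph) : QState n :=
  (x.foldl (fun p σ => (A.tr p.1 σ, mApply (A.U p.1 σ) p.2)) (A.s0, A.ψ0)).2

/-- Acceptance probability `‖P_{s_x,acc}|ψ_x⟩‖²`. -/
def probAcc (A : QFAC Alph S n) (x : List Alph) : ℝ :=
  ‖mApply (A.P (A.sState x)) (A.qState x)‖ ^ 2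

/-- Recognition with cut-point `lam` isolated by `ε`. -/
def Recognizes (A : QFAC Alph S n) (L : Set (List Alph)) (lam ε : ℝ) : Prop :=
  (∀ x ∈ L, lam + ε ≤ A.probAcc x) ∧ (∀ x ∉ L, A.probAcc x ≤ lam - ε)

end QFAC

/-!
Words reaching the same classical state `s` evolve under the same unitaries from then on, so
the distance between their quantum states is preserved by every suffix `z`; projections do not
increase it either. If `x, y ∈ A_s` are not Myhill–Nerode equivalent, a separating suffix `z`
gives acceptance probabilities `p ≥ lam + ε` and `q ≤ lam - ε`, hence
`ε ≤ |√p - √q| ≤ ‖ψ_x - ψ_y‖`. Choosing one word per class thus yields an `ε`-separated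
family of unit vectors in `ℂⁿ ≅ ℝ²ⁿ`, and comparing the volumes of the disjoint balls of
radius `ε/2` around them with that of the ball of radius `1 + ε/2` bounds its size by
`(1 + 2/ε)^(2n)`.
-/

open MeasureTheory Module
open scoped Finset

section Packing

variable {E : Type*} [NormedAddCommGroup E] [NormedSpace ℝ E] [FiniteDimensional ℝ E]

theorem Finset.card_le_of_norm_le_one_of_separated {ε : ℝ} (hε : 0 < ε) (T : Finset E)
    (hT : ∀ x ∈ T, ‖x‖ ≤ 1) (hsep : (T : Set E).Pairwise fun x y => ε ≤ dist x y) :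
    (#T : ℝ) ≤ (1 + 2 / ε) ^ finrank ℝ E := by
  borelize E
  set μ : Measure E := Measure.addHaar
  have hε2 : 0 < ε / 2 := half_pos hε
  have hdisj : (T : Set E).PairwiseDisjoint fun x => Metric.ball x (ε / 2) :=
    fun x hx y hy hxy => Metric.ball_disjoint_ball (by linarith [hsep hx hy hxy])
  have hsub : ∀ x ∈ T, Metric.ball x (ε / 2) ⊆ Metric.ball 0 (1 + ε / 2) := fun x hx =>
    Metric.ball_subset_ball' (by rw [dist_zero_right]; linarith [hT x hx])
  have hvol : ∑ x ∈ T, μ (Metric.ball x (ε / 2)) ≤ μ (Metric.ball 0 (1 + ε / 2)) := by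
    rw [← measure_biUnion_finset hdisj fun x _ => measurableSet_ball]
    exact measure_mono (Set.iUnion₂_subset hsub)
  simp only [Measure.addHaar_ball_of_pos μ _ hε2, Measure.addHaar_ball_of_pos μ _
    (by linarith : (0 : ℝ) < 1 + ε / 2), Finset.sum_const, nsmul_eq_mul, ← mul_assoc] at hvol
  have hcard : (#T : ℝ) * (ε / 2) ^ finrank ℝ E ≤ (1 + ε / 2) ^ finrank ℝ E := by
    rw [ENNReal.mul_le_mul_iff_left (Metric.measure_ball_pos μ 0 one_pos).ne'
        measure_ball_lt_top.ne,
      ← ENNReal.ofReal_natCast, ← ENNReal.ofReal_mul (by positivity),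
      ENNReal.ofReal_le_ofReal_iff (by positivity)] at hvol
    exact hvol
  calc (#T : ℝ) ≤ (1 + ε / 2) ^ finrank ℝ E / (ε / 2) ^ finrank ℝ E :=
        (le_div_iff₀ (by positivity)).mpr hcard
    _ = (1 + 2 / ε) ^ finrank ℝ E := by
        rw [← div_pow]
        congr 1
        field_simp
        ring

theorem finite_and_natCard_le_of_forall_finset_card_le {ι : Type*} {N : ℕ}
    (h : ∀ T : Finset ι, #T ≤ N) : Finite ι ∧ Nat.card ι ≤ N := by
  have hfin : Finite ι := Cardinal.lt_aleph0_iff_finite.mp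
    ((Cardinal.card_le_of h).trans_lt Cardinal.natCast_lt_aleph0)
  have := Fintype.ofFinite ι
  exact ⟨hfin, by simpa [Nat.card_eq_fintype_card] using h Finset.univ⟩

theorem finite_and_natCard_le_of_norm_le_one_of_separated {ι : Type*} {ε : ℝ} (hε : 0 < ε)
    (f : ι → E) (hf : ∀ i, ‖f i‖ ≤ 1) (hsep : Pairwise fun i j => ε ≤ dist (f i) (f j)) :
    Finite ι ∧ (Nat.card ι : ℝ) ≤ (1 + 2 / ε) ^ finrank ℝ E := by
  have hinj : Function.Injective f := fun i j hij => by
    by_contra hne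
    linarith [hsep hne, dist_eq_zero.mpr hij]
  have hbound : ∀ T : Finset ι, #T ≤ ⌊(1 + 2 / ε) ^ finrank ℝ E⌋₊ := fun T => by
    refine Nat.le_floor ?_
    rw [← Finset.card_map ⟨f, hinj⟩]
    refine Finset.card_le_of_norm_le_one_of_separated hε _ (by simp [hf]) ?_
    simp only [Finset.coe_map, Function.Embedding.coeFn_mk]
    exact (hsep.set_pairwise _).image
  obtain ⟨hfin, hcard⟩ := finite_and_natCard_le_of_forall_finset_card_le hbound
  exact ⟨hfin, (Nat.cast_le.mpr hcard).trans (Nat.floor_le (by positivity))⟩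

end Packing

theorem le_abs_sub_of_two_mul_le_abs_sq_sub {a b ε : ℝ} (ha₀ : 0 ≤ a) (ha₁ : a ≤ 1)
    (hb₀ : 0 ≤ b) (hb₁ : b ≤ 1) (h : 2 * ε ≤ |a ^ 2 - b ^ 2|) : ε ≤ |a - b| := by
  have : |a ^ 2 - b ^ 2| ≤ |a - b| * 2 := by
    rw [sq_sub_sq, abs_mul, mul_comm]
    gcongr
    rw [abs_of_nonneg (by linarith)]
    linarith
  linarith

section Matrix

variable {n : ℕ}

theorem norm_mApply_of_mem_unitaryGroup {U : Matrix (Fin n) (Fin n) ℂ}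
    (hU : U ∈ Matrix.unitaryGroup (Fin n) ℂ) (v : QState n) : ‖mApply U v‖ = ‖v‖ :=
  (Matrix.toEuclideanCLM (𝕜 := ℂ) U).norm_map_of_mem_unitary
    (Unitary.map_mem Matrix.toEuclideanCLM hU) v

theorem norm_mApply_le_of_isStarProjection {P : Matrix (Fin n) (Fin n) ℂ}
    (hP : IsStarProjection P) (v : QState n) : ‖mApply P v‖ ≤ ‖v‖ :=
  (Matrix.toEuclideanCLM (𝕜 := ℂ) P).le_of_opNorm_le
    ((hP.map Matrix.toEuclideanCLM).norm_le _) v |>.trans_eq (one_mul _)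

def linearIsometryOfMemUnitaryGroup {U : Matrix (Fin n) (Fin n) ℂ}
    (hU : U ∈ Matrix.unitaryGroup (Fin n) ℂ) :
    QState n →ₗᵢ[ℂ] QState n where
  toLinearMap := Matrix.toEuclideanLin U
  norm_map' := norm_mApply_of_mem_unitaryGroup hU

end Matrix

namespace QFAC

variable {Alph S : Type} {n : ℕ} (A : QFAC Alph S n)

theorem isStarProjection_P (s : S) : IsStarProjection (A.P s) :=
  ⟨(A.P_proj s).2, (A.P_proj s).1⟩

def step (p : S × QState n) (σ : Alph) : S × QState n :=
  (A.tr p.1 σ, mApply (A.U p.1 σ) p.2)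

def evolve : S → List Alph → QState n →ₗᵢ[ℂ] QState n
  | _, [] => LinearIsometry.id
  | s, σ :: z => (evolve (A.tr s σ) z).comp (linearIsometryOfMemUnitaryGroup (A.U_unitary s σ))

theorem foldl_step (s : S) (z : List Alph) (v : QState n) :
    z.foldl A.step (s, v) = (z.foldl A.tr s, A.evolve s z v) := by
  induction z generalizing s v with
  | nil => rfl
  | cons σ z ih => exact ih _ _

theorem qState_eq_evolve (x : List Alph) : A.qState x = A.evolve A.s0 x A.ψ0 :=
  congrArg Prod.snd (A.foldl_step A.s0 x A.ψ0)

theorem qState_append (x z : List Alph) :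
    A.qState (x ++ z) = A.evolve (A.sState x) z (A.qState x) := by
  have hx : x.foldl A.step (A.s0, A.ψ0) = (A.sState x, A.qState x) := by
    rw [foldl_step, qState_eq_evolve]
    rfl
  change ((x ++ z).foldl A.step (A.s0, A.ψ0)).2 = _
  rw [List.foldl_append, hx, foldl_step]

theorem sState_append (x z : List Alph) : A.sState (x ++ z) = z.foldl A.tr (A.sState x) :=
  List.foldl_append ..

theorem norm_qState (x : List Alph) : ‖A.qState x‖ = 1 := by
  rw [qState_eq_evolve, LinearIsometry.norm_map, A.ψ0_unit]

theorem norm_accepted_le_one (x : List Alph) :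
    ‖mApply (A.P (A.sState x)) (A.qState x)‖ ≤ 1 :=
  (norm_mApply_le_of_isStarProjection (A.isStarProjection_P _) _).trans (A.norm_qState x).le

theorem abs_norm_accepted_append_sub_le {x y : List Alph} (hxy : A.sState x = A.sState y)
    (z : List Alph) :
    |‖mApply (A.P (A.sState (x ++ z))) (A.qState (x ++ z))‖ -
        ‖mApply (A.P (A.sState (y ++ z))) (A.qState (y ++ z))‖| ≤
      ‖A.qState x - A.qState y‖ := by
  rw [A.sState_append y, ← hxy, ← A.sState_append]
  set M := Matrix.toEuclideanLin (A.P (A.sState (x ++ z)))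
  calc _ ≤ ‖M (A.qState (x ++ z)) - M (A.qState (y ++ z))‖ := abs_norm_sub_norm_le _ _
    _ = ‖mApply (A.P (A.sState (x ++ z))) (A.qState (x ++ z) - A.qState (y ++ z))‖ := by
        rw [← map_sub]
        rfl
    _ ≤ ‖A.qState (x ++ z) - A.qState (y ++ z)‖ :=
        norm_mApply_le_of_isStarProjection (A.isStarProjection_P _) _
    _ = ‖A.qState x - A.qState y‖ := by
        rw [qState_append, qState_append, hxy, ← map_sub, LinearIsometry.norm_map]

variable {A} {L : Set (List Alph)} {lam ε : ℝ}

theorem Recognizes.two_mul_le_abs_probAcc_sub (hrec : A.Recognizes L lam ε) {u v : List Alph}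
    (huv : ¬(u ∈ L ↔ v ∈ L)) : 2 * ε ≤ |A.probAcc u - A.probAcc v| := by
  by_cases hu : u ∈ L
  · have hv : v ∉ L := fun hv => huv (iff_of_true hu hv)
    exact le_abs.mpr (Or.inl (by linarith [hrec.1 u hu, hrec.2 v hv]))
  · have hv : v ∈ L := by_contra fun hv => huv (iff_of_false hu hv)
    exact le_abs.mpr (Or.inr (by linarith [hrec.2 u hu, hrec.1 v hv]))

theorem Recognizes.le_norm_qState_sub (hrec : A.Recognizes L lam ε) {x y : List Alph}
    (hxy : A.sState x = A.sState y) (hne : ¬mnEquiv L x y) :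
    ε ≤ ‖A.qState x - A.qState y‖ := by
  obtain ⟨z, hz⟩ := not_forall.mp hne
  exact (le_abs_sub_of_two_mul_le_abs_sq_sub (norm_nonneg _) (A.norm_accepted_le_one _)
    (norm_nonneg _) (A.norm_accepted_le_one _) (hrec.two_mul_le_abs_probAcc_sub hz)).trans
    (A.abs_norm_accepted_append_sub_le hxy z)

end QFAC

theorem stmt_3_general {Alph S : Type} {n : ℕ}
    (A : QFAC Alph S n) (L : Set (List Alph)) (lam ε : ℝ)
    (hε : 0 < ε)
    (hrec : A.Recognizes L lam ε) (s : S) :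
    Finite (Quotient ((mnSetoid L).comap
      (Subtype.val : {w : List Alph // A.sState w = s} → List Alph))) ∧
    (Nat.card (Quotient ((mnSetoid L).comap
      (Subtype.val : {w : List Alph // A.sState w = s} → List Alph))) : ℝ)
      ≤ (1 + 2 / ε) ^ (2 * n) := by
  have hdim : finrank ℝ (QState n) = 2 * n := by
    rw [finrank_real_of_complex, finrank_euclideanSpace_fin]
  rw [← hdim]
  refine finite_and_natCard_le_of_norm_le_one_of_separated hε
    (fun c => A.qState c.out.val) (fun c => (A.norm_qState _).le) fun c c' hne => ?_
  dsimp only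
  rw [dist_eq_norm]
  refine hrec.le_norm_qState_sub (c.out.property.trans c'.out.property.symm) fun h => hne ?_
  exact Quotient.out_equiv_out.mp h

/-- If a 1QFAC with classical state set `S` and `n` quantum basis states
recognizes `L` with cut-point `lam` isolated by `ε`, then for each classical state `s`,
the set `A_s = {w : s_w = s}` splits into at most `(1 + 2/ε)^(2n)` Myhill–Nerode classes. -/
theorem stmt_3 {Alph S : Type} [Fintype Alph] [Fintype S] {n : ℕ}
    (A : QFAC Alph S n) (L : Set (List Alph)) (lam ε : ℝ)
    (hlam : 0 < lam ∧ lam < 1) (hε : 0 < ε)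
    (hrec : A.Recognizes L lam ε) (s : S) :
    Finite (Quotient ((mnSetoid L).comap
      (Subtype.val : {w : List Alph // A.sState w = s} → List Alph))) ∧
    (Nat.card (Quotient ((mnSetoid L).comap
      (Subtype.val : {w : List Alph // A.sState w = s} → List Alph))) : ℝ)
      ≤ (1 + 2 / ε) ^ (2 * n) :=
  stmt_3_general A L lam ε hε hrec s

end
end

section
/- Let σ be a finite set, f : σ → σ, s₀ ∈ σ, F ⊆ σ, and let d ≥ 1 be an integer. Suppose that for all m ∈ ℕ, f^[m](s₀) ∈ F if and only if d divides m (i.e., the unary DFA with transition f, start state s₀ and accepting set F accepts exactly the language L(d) = {0^{zd} : z ∈ ℕ}). If s = f^[j](s₀) for some j ∈ ℕ with d ∣ j, and s is a periodic point of f (i.e., f^[m](s) = s for some m ≥ 1), then d divides the minimal period of s under f. -/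
noncomputable section

/-- If the unary DFA given by transition `f`, start `s₀`, accepting set `F`
accepts exactly `{0^m : d ∣ m}`, then for any state `s = f^[j](s₀)` with `d ∣ j` that is a
periodic point of `f`, `d` divides the minimal period of `s` under `f`. -/
theorem stmt_5 {σ : Type} [Finite σ] (f : σ → σ) (s₀ : σ) (F : Set σ)
    (d : ℕ) (hd : 1 ≤ d)
    (hL : ∀ m : ℕ, f^[m] s₀ ∈ F ↔ d ∣ m)
    (s : σ) (j : ℕ) (hs : s = f^[j] s₀) (hj : d ∣ j)
    (hper : ∃ m : ℕ, 0 < m ∧ f^[m] s = s) :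
    d ∣ Function.minimalPeriod f s := by
  set p := Function.minimalPeriod f s with hp
  have hiter : f^[p] s = s := Function.iterate_minimalPeriod
  have hjp : f^[j + p] s₀ = s := by
    rw [Nat.add_comm, Function.iterate_add_apply, ← hs, hiter]
  have hdjp : d ∣ j + p := by
    rw [← hL (j + p), hjp, hs]
    exact (hL j).mpr hj
  exact (Nat.dvd_add_right hj).mp hdjp

end
end

section
/- Let Σ be a finite alphabet of size m ≥ 1 and let L ⊆ Σ* be a nonempty finite language, with l = max_{x∈L}|x| the length of a longest string in L. Then there exists a 1QFAC over Σ with l + 2 classical states and m^l quantum basis states that recognizes L exactly, i.e., its acceptance probability is 1 on every w ∈ L and 0 on every w ∉ L. -/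
/-!
The classical states count the letters read so far, saturating at `l + 1`. The quantum state is
the basis vector indexed by the input padded to length `l` with a fixed letter `a₀`: reading the
`k`-th letter `σ` swaps `a₀` and `σ` in coordinate `k`, a permutation of the basis and hence a
unitary. Padding is injective on words of a fixed length, so in classical state `k` the projection
onto the span of the padded words of `L` of length `k` accepts exactly the words of `L`.
-/

noncomputable section

namespace QFAC

variable {Alph S : Type} {n : ℕ} (A : QFAC Alph S n)

theorem foldl_run_fst (x : List Alph) (p : S × QState n) :
    (x.foldl (fun p σ => (A.tr p.1 σ, mApply (A.U p.1 σ) p.2)) p).1 = x.foldl A.tr p.1 := by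
  induction x generalizing p with
  | nil => rfl
  | cons σ x ih => exact ih _

theorem sState_append_singleton (x : List Alph) (σ : Alph) :
    A.sState (x ++ [σ]) = A.tr (A.sState x) σ := by
  simp [sState]

theorem qState_append_singleton (x : List Alph) (σ : Alph) :
    A.qState (x ++ [σ]) = mApply (A.U (A.sState x) σ) (A.qState x) := by
  simp only [qState, List.foldl_append, List.foldl_cons, List.foldl_nil, foldl_run_fst]
  rfl

end QFAC

section BasisMatrices

variable {n : ℕ}

theorem Matrix.permMatrix_mem_unitaryGroup {ι R : Type*} [Fintype ι] [DecidableEq ι] [CommRing R]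
    [StarRing R] (π : Equiv.Perm ι) : π.permMatrix R ∈ Matrix.unitaryGroup ι R := by
  rw [Matrix.mem_unitaryGroup_iff, Matrix.star_eq_conjTranspose, Matrix.conjTranspose_permMatrix,
    ← Matrix.permMatrix_mul, inv_mul_cancel, Matrix.permMatrix_one]

theorem mApply_permMatrix_single (π : Equiv.Perm (Fin n)) (j : Fin n) (c : ℂ) :
    mApply (π.permMatrix ℂ) (EuclideanSpace.single j c) = EuclideanSpace.single (π.symm j) c := by
  ext i
  simp [mApply, Equiv.eq_symm_apply]

def coordProj (s : Set (Fin n)) : Matrix (Fin n) (Fin n) ℂ :=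
  Matrix.diagonal (s.indicator 1)

theorem coordProj_isProj (s : Set (Fin n)) :
    (coordProj s).conjTranspose = coordProj s ∧ coordProj s * coordProj s = coordProj s := by
  refine ⟨?_, ?_⟩ <;>
  · simp only [coordProj, Matrix.diagonal_conjTranspose, Matrix.diagonal_mul_diagonal]
    congr 1
    ext i
    by_cases hi : i ∈ s <;> simp [hi]

theorem coordProj_empty : coordProj (∅ : Set (Fin n)) = 0 := by
  simp [coordProj]

theorem norm_mApply_coordProj_single_sq (s : Set (Fin n)) (j : Fin n) :
    ‖mApply (coordProj s) (EuclideanSpace.single j 1)‖ ^ 2 = s.indicator 1 j := by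
  have hproj : mApply (coordProj s) (EuclideanSpace.single j 1)
      = EuclideanSpace.single j (s.indicator 1 j) := by
    ext i
    by_cases hij : i = j <;> simp [mApply, coordProj, Matrix.mulVec_diagonal, hij]
  by_cases hj : j ∈ s <;> simp [hproj, hj]

end BasisMatrices

section Padding

variable {Alph : Type} (a₀ : Alph) {l : ℕ}

def padWord (l : ℕ) (x : List Alph) : Fin l → Alph := fun i => x.getD i a₀

theorem padWord_injOn {k : ℕ} (hk : k ≤ l) : Set.InjOn (padWord a₀ l) {u | u.length = k} := by
  intro u hu w hw h
  refine List.ext_getElem (hu.trans hw.symm) fun i hiu hiw => ?_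
  simpa [padWord, List.getD_eq_getElem, hiu, hiw] using congrFun h ⟨i, by simp_all; omega⟩

variable [DecidableEq Alph]

-- A swap rather than an overwrite, so that reading a letter permutes the basis.
def writeLetter (k : Fin l) (σ : Alph) : Equiv.Perm (Fin l → Alph) :=
  Equiv.piCongrRight (Function.update (fun _ => Equiv.refl Alph) k (Equiv.swap a₀ σ))

theorem writeLetter_apply (k : Fin l) (σ : Alph) (f : Fin l → Alph) (i : Fin l) :
    writeLetter a₀ k σ f i = if i = k then Equiv.swap a₀ σ (f i) else f i := by
  rcases eq_or_ne i k with rfl | h <;> simp [writeLetter, *]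

theorem padWord_append_singleton {x : List Alph} {k : Fin l} (hk : (k : ℕ) = x.length)
    (σ : Alph) : padWord a₀ l (x ++ [σ]) = writeLetter a₀ k σ (padWord a₀ l x) := by
  ext i
  rw [writeLetter_apply]
  split_ifs with hi
  · subst hi; simp [padWord, hk]
  · have hi' : (i : ℕ) ≠ x.length := fun h => hi (Fin.ext (h.trans hk.symm))
    rcases lt_or_gt_of_ne hi' with hlt | hgt
    · simp [padWord, List.getElem?_append_left, hlt]
    · have : (x ++ [σ]).length ≤ i := by simpa using hgt
      simp [padWord, List.getElem?_eq_none this, hgt.le]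

end Padding

section FiniteLanguage

variable {Alph : Type} [DecidableEq Alph] (a₀ : Alph) (l : ℕ) (L : Set (List Alph)) {n : ℕ}
  (e : (Fin l → Alph) ≃ Fin n)

def finiteLanguageQFAC : QFAC Alph (Fin (l + 2)) n where
  s0 := 0
  tr s _ := ⟨min (s + 1) (l + 1), by omega⟩
  ψ0 := EuclideanSpace.single (e (padWord a₀ l [])) 1
  ψ0_unit := by simp
  U s σ :=
    if h : (s : ℕ) < l then Equiv.Perm.permMatrix ℂ (e.permCongr (writeLetter a₀ ⟨s, h⟩ σ)).symm
    else 1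
  U_unitary s σ := by
    split
    · exact Matrix.permMatrix_mem_unitaryGroup _
    · exact one_mem _
  P s := coordProj (e ∘ padWord a₀ l '' {u ∈ L | u.length = s})
  P_proj s := coordProj_isProj _

theorem finiteLanguageQFAC_sState_val (x : List Alph) :
    ((finiteLanguageQFAC a₀ l L e).sState x : ℕ) = min x.length (l + 1) := by
  induction x using List.reverseRecOn with
  | nil => simp [QFAC.sState, finiteLanguageQFAC]
  | append_singleton x σ ih =>
    rw [QFAC.sState_append_singleton]
    simp only [finiteLanguageQFAC, List.length_append, List.length_singleton] at ih ⊢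
    omega

theorem finiteLanguageQFAC_U {s : Fin (l + 2)} (hs : (s : ℕ) < l) (σ : Alph) :
    (finiteLanguageQFAC a₀ l L e).U s σ
      = Equiv.Perm.permMatrix ℂ (e.permCongr (writeLetter a₀ ⟨s, hs⟩ σ)).symm :=
  dif_pos hs

theorem finiteLanguageQFAC_P (s : Fin (l + 2)) :
    (finiteLanguageQFAC a₀ l L e).P s = coordProj (e ∘ padWord a₀ l '' {u ∈ L | u.length = s}) :=
  rfl

theorem finiteLanguageQFAC_qState {x : List Alph} (hx : x.length ≤ l) :
    (finiteLanguageQFAC a₀ l L e).qState x = EuclideanSpace.single (e (padWord a₀ l x)) 1 := by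
  induction x using List.reverseRecOn with
  | nil => rfl
  | append_singleton x σ ih =>
    have hxl : x.length < l := by simp at hx; omega
    have hs : ((finiteLanguageQFAC a₀ l L e).sState x : ℕ) = x.length := by
      rw [finiteLanguageQFAC_sState_val]; omega
    have hsl : ((finiteLanguageQFAC a₀ l L e).sState x : ℕ) < l := hs ▸ hxl
    rw [QFAC.qState_append_singleton, ih hxl.le, finiteLanguageQFAC_U a₀ l L e hsl,
      mApply_permMatrix_single, Equiv.symm_symm, Equiv.permCongr_apply, Equiv.symm_apply_apply,
      padWord_append_singleton a₀ (k := ⟨_, hsl⟩) hs]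

theorem finiteLanguageQFAC_probAcc (hL : ∀ u ∈ L, u.length ≤ l)
    (w : List Alph) : (finiteLanguageQFAC a₀ l L e).probAcc w = L.indicator 1 w := by
  classical
  have hs := finiteLanguageQFAC_sState_val a₀ l L e w
  rw [QFAC.probAcc]
  rcases le_or_gt w.length l with hw | hw
  · have hmem : e (padWord a₀ l w)
        ∈ e ∘ padWord a₀ l '' {u ∈ L | u.length = (finiteLanguageQFAC a₀ l L e).sState w}
        ↔ w ∈ L := by
      rw [Set.image_comp, e.injective.mem_set_image, (padWord_injOn a₀ hw).mem_image_iff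
        (fun u hu => hu.2.trans (by omega)) rfl]
      simp only [Set.mem_ofPred_eq, and_iff_left_iff_imp]
      omega
    rw [finiteLanguageQFAC_qState a₀ l L e hw, finiteLanguageQFAC_P,
      norm_mApply_coordProj_single_sq]
    simp only [Set.indicator_apply, hmem, Pi.one_apply]
  · have hnone : {u ∈ L | u.length = (finiteLanguageQFAC a₀ l L e).sState w} = ∅ := by
      ext u
      simp only [Set.mem_ofPred_eq, Set.mem_empty_iff_false, iff_false, not_and]
      exact fun hu => by have := hL u hu; omega
    have hw' : w ∉ L := fun h => (hL w h).not_gt hw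
    rw [finiteLanguageQFAC_P, hnone, Set.image_empty, coordProj_empty]
    simp [mApply, hw']

end FiniteLanguage

theorem stmt_9_general {Alph : Type} [Fintype Alph] (hm : 1 ≤ Fintype.card Alph)
    (L : Set (List Alph)) (l : ℕ) (hl : ∀ x ∈ L, x.length ≤ l) :
    ∃ A : QFAC Alph (Fin (l + 2)) (Fintype.card Alph ^ l),
      (∀ w ∈ L, A.probAcc w = 1) ∧ (∀ w ∉ L, A.probAcc w = 0) := by
  classical
  have : Nonempty Alph := Fintype.card_pos_iff.mp hm
  let e : (Fin l → Alph) ≃ Fin (Fintype.card Alph ^ l) := Fintype.equivFinOfCardEq (by simp)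
  refine ⟨finiteLanguageQFAC (Classical.arbitrary Alph) l L e, fun w hw => ?_, fun w hw => ?_⟩ <;>
    simp [finiteLanguageQFAC_probAcc _ _ _ e hl, hw]

/-- For a nonempty finite language `L` over an alphabet of size `m ≥ 1`
with longest-string length `l`, there is a 1QFAC with `l + 2` classical states and `m^l`
quantum basis states recognizing `L` exactly (probability 1 on `L`, 0 off `L`). -/
theorem stmt_9 {Alph : Type} [Fintype Alph] (hm : 1 ≤ Fintype.card Alph)
    (L : Set (List Alph)) (hLfin : L.Finite) (hLne : L.Nonempty)
    (l : ℕ) (hl : ∀ x ∈ L, x.length ≤ l) (hl' : ∃ x ∈ L, x.length = l) :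
    ∃ A : QFAC Alph (Fin (l + 2)) (Fintype.card Alph ^ l),
      (∀ w ∈ L, A.probAcc w = 1) ∧ (∀ w ∉ L, A.probAcc w = 0) :=
  stmt_9_general hm L l hl

end
end

section
/- Let A be a 1QFAC over a finite alphabet Σ that recognizes a language L ⊆ Σ* with cut-point λ isolated by ε. Call a string w ∈ Σ* 'L self-reachable' if there exists a nonempty string y ∈ Σ⁺ with w ≡_L wy. Let x, x', z' ∈ Σ* be strings such that z = x·x' is not L self-reachable, let y = z·z', and suppose |z'·x'| > 0. Then s_x ≠ s_y, i.e., the classical states of A reached after reading x and after reading y are different. -/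
noncomputable section

/-- `w` is `L` self-reachable if `w ≡_L wy` for some nonempty `y`. -/
def SelfReachable {α : Type} (L : Set (List α)) (w : List α) : Prop :=
  ∃ y : List α, y ≠ [] ∧ mnEquiv L w (w ++ y)



lemma mApply_one {n : ℕ} (v : QState n) : mApply 1 v = v := by
  simp [mApply, Matrix.toEuclideanLin_apply]

lemma mApply_mul {n : ℕ} (M N : Matrix (Fin n) (Fin n) ℂ) (v : QState n) :
    mApply (M * N) v = mApply M (mApply N v) := by
  simp [mApply, Matrix.toEuclideanLin_apply, Matrix.mulVec_mulVec]

lemma mApply_sub {n : ℕ} (M : Matrix (Fin n) (Fin n) ℂ) (v w : QState n) :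
    mApply M (v - w) = mApply M v - mApply M w := by
  simp [mApply]

lemma mApply_norm_unitary {n : ℕ} {M : Matrix (Fin n) (Fin n) ℂ}
    (h : M ∈ Matrix.unitaryGroup (Fin n) ℂ) (v : QState n) : ‖mApply M v‖ = ‖v‖ := by
  have key : mApply M.conjTranspose (mApply M v) = v := by
    rw [← mApply_mul, ← Matrix.star_eq_conjTranspose, h.1, mApply_one]
  have h2 : (@inner ℂ _ _ (mApply M v) (mApply M v)) = @inner ℂ _ _ v v := by
    calc (@inner ℂ _ _ (mApply M v) (mApply M v))
        = @inner ℂ _ _ (mApply M.conjTranspose (mApply M v)) v := by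
          rw [mApply, mApply, Matrix.toEuclideanLin_conjTranspose_eq_adjoint,
            LinearMap.adjoint_inner_left]
      _ = @inner ℂ _ _ v v := by rw [key]
  have h3 : ‖mApply M v‖ ^ 2 = ‖v‖ ^ 2 := by
    rw [← inner_self_eq_norm_sq (𝕜 := ℂ), ← inner_self_eq_norm_sq (𝕜 := ℂ), h2]
  nlinarith [norm_nonneg (mApply M v), norm_nonneg v]

lemma mApply_norm_proj {n : ℕ} {P : Matrix (Fin n) (Fin n) ℂ}
    (h1 : P.conjTranspose = P) (h2 : P * P = P) (v : QState n) :
    ‖mApply P v‖ ≤ ‖v‖ := by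
  have key : (@inner ℂ _ _ (mApply P v) (mApply P v)) = @inner ℂ _ _ (mApply P v) v := by
    calc (@inner ℂ _ _ (mApply P v) (mApply P v))
        = @inner ℂ _ _ (mApply P.conjTranspose (mApply P v)) v := by
          rw [mApply, mApply, Matrix.toEuclideanLin_conjTranspose_eq_adjoint,
            LinearMap.adjoint_inner_left]
      _ = _ := by rw [h1, ← mApply_mul, h2]
  have e1 : ‖mApply P v‖ ^ 2 = RCLike.re (@inner ℂ _ _ (mApply P v) v) := by
    rw [← inner_self_eq_norm_sq (𝕜 := ℂ), key]
  have e2 : RCLike.re (@inner ℂ _ _ (mApply P v) v) ≤ ‖mApply P v‖ * ‖v‖ := by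
    calc RCLike.re (@inner ℂ _ _ (mApply P v) v)
        ≤ ‖(@inner ℂ _ _ (mApply P v) v)‖ := RCLike.re_le_norm _
      _ ≤ _ := norm_inner_le_norm _ _
  nlinarith [norm_nonneg (mApply P v), norm_nonneg v]

lemma norm_sq_diff_le {n : ℕ} (a b : QState n) (ha : ‖a‖ ≤ 1) (hb : ‖b‖ ≤ 1) :
    |‖a‖ ^ 2 - ‖b‖ ^ 2| ≤ 2 * ‖a - b‖ := by
  have h1 := abs_le.mp (abs_norm_sub_norm_le a b)
  rw [abs_le]
  constructor <;> nlinarith [norm_nonneg a, norm_nonneg b, h1.1, h1.2]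

namespace QFAC
variable {Alph S : Type} {n : ℕ}

def mword (A : QFAC Alph S n) : S → List Alph → Matrix (Fin n) (Fin n) ℂ
  | _, [] => 1
  | s, σ :: w => A.mword (A.tr s σ) w * A.U s σ

lemma mword_unitary (A : QFAC Alph S n) (s : S) (w : List Alph) :
    A.mword s w ∈ Matrix.unitaryGroup (Fin n) ℂ := by
  induction w generalizing s with
  | nil => exact one_mem _
  | cons σ w ih => exact mul_mem (ih _) (A.U_unitary s σ)

lemma foldl_fst (A : QFAC Alph S n) (w : List Alph) (s : S) (ψ : QState n) :
    (w.foldl (fun p σ => (A.tr p.1 σ, mApply (A.U p.1 σ) p.2)) (s, ψ)).1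
      = w.foldl A.tr s := by
  induction w generalizing s ψ with
  | nil => rfl
  | cons σ w ih => exact ih _ _

lemma foldl_snd (A : QFAC Alph S n) (w : List Alph) (s : S) (ψ : QState n) :
    (w.foldl (fun p σ => (A.tr p.1 σ, mApply (A.U p.1 σ) p.2)) (s, ψ)).2
      = mApply (A.mword s w) ψ := by
  induction w generalizing s ψ with
  | nil => simp [mword, mApply_one]
  | cons σ w ih =>
      rw [List.foldl_cons]
      show (w.foldl _ (A.tr s σ, mApply (A.U s σ) ψ)).2 = _
      rw [ih]
      show _ = mApply (A.mword (A.tr s σ) w * A.U s σ) ψ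
      rw [mApply_mul]

lemma foldl_pair (A : QFAC Alph S n) (a : List Alph) :
    (a.foldl (fun p σ => (A.tr p.1 σ, mApply (A.U p.1 σ) p.2)) (A.s0, A.ψ0))
      = (A.sState a, A.qState a) := by
  ext1
  · exact A.foldl_fst a A.s0 A.ψ0
  · rfl

lemma sState_append_s10 (A : QFAC Alph S n) (a b : List Alph) :
    A.sState (a ++ b) = b.foldl A.tr (A.sState a) := by
  simp [sState, List.foldl_append]

lemma qState_append_s10 (A : QFAC Alph S n) (a b : List Alph) :
    A.qState (a ++ b) = mApply (A.mword (A.sState a) b) (A.qState a) := by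
  unfold qState
  rw [List.foldl_append, A.foldl_pair a, A.foldl_snd]

lemma qState_norm (A : QFAC Alph S n) (x : List Alph) : ‖A.qState x‖ = 1 := by
  have h : A.qState x = mApply (A.mword A.s0 x) A.ψ0 := A.foldl_snd x A.s0 A.ψ0
  rw [h, mApply_norm_unitary (A.mword_unitary _ _), A.ψ0_unit]

end QFAC

def repList {α : Type} (y : List α) : ℕ → List α
  | 0 => []
  | k + 1 => repList y k ++ y

/-- If a 1QFAC recognizes `L` with isolated cut-point, `z = x ++ x'` is
not `L` self-reachable, `y = z ++ z'`, and `z' ++ x'` is nonempty, then `s_x ≠ s_y`. -/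
theorem stmt_10 {Alph S : Type} [Fintype Alph] {n : ℕ}
    (A : QFAC Alph S n) (L : Set (List Alph)) (lam ε : ℝ)
    (hlam : 0 < lam ∧ lam < 1) (hε : 0 < ε)
    (hrec : A.Recognizes L lam ε)
    (x x' z' : List Alph)
    (hz : ¬ SelfReachable L (x ++ x'))
    (hlen : 0 < (z' ++ x').length) :
    A.sState x ≠ A.sState ((x ++ x') ++ z') := by
  intro heq
  set z := x ++ x' with hzdef
  set y0 := z' ++ x' with hy0def
  set s := A.sState z with hs
  have hy0ne : y0 ≠ [] := List.length_pos_iff.mp hlen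
  -- the classical state loops along y0 starting from s
  have hloop : y0.foldl A.tr s = s := by
    have h1 : z'.foldl A.tr s = A.sState x := by
      rw [← A.sState_append_s10 z z', ← heq]
    have h2 : y0.foldl A.tr s = x'.foldl A.tr (z'.foldl A.tr s) := by
      rw [hy0def, List.foldl_append]
    rw [h2, h1, hs, hzdef, A.sState_append_s10]
  set V := A.mword s y0 with hV
  have hVu : V ∈ Matrix.unitaryGroup (Fin n) ℂ := A.mword_unitary s y0
  have hiter : ∀ k, A.sState (z ++ repList y0 k) = s ∧
      A.qState (z ++ repList y0 k) = mApply (V ^ k) (A.qState z) := by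
    intro k; induction k with
    | zero =>
        constructor
        · show A.sState (z ++ []) = s
          rw [List.append_nil]
        · show A.qState (z ++ []) = mApply (V ^ 0) (A.qState z)
          rw [List.append_nil, pow_zero, mApply_one]
    | succ k ih =>
        have e : z ++ repList y0 (k + 1) = (z ++ repList y0 k) ++ y0 := by
          rw [show repList y0 (k + 1) = repList y0 k ++ y0 from rfl, ← List.append_assoc]
        constructor
        · rw [e, A.sState_append_s10, ih.1, hloop]
        · rw [e, A.qState_append_s10, ih.1, ih.2, ← hV, ← mApply_mul, ← pow_succ']
  -- find m ≥ 1 with V^m ψ_z close to ψ_z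
  obtain ⟨m, hm1, hmε⟩ : ∃ m : ℕ, 1 ≤ m ∧
      ‖mApply (V ^ m) (A.qState z) - A.qState z‖ < ε := by
    set f : ℕ → QState n := fun k => mApply (V ^ k) (A.qState z) with hf
    have hfmem : ∀ k, f k ∈ Metric.closedBall (0 : QState n) 1 := by
      intro k
      rw [Metric.mem_closedBall, dist_zero_right, hf]
      rw [mApply_norm_unitary (pow_mem hVu k), A.qState_norm]
    obtain ⟨a, -, φ, hφ, hconv⟩ :=
      (isCompact_closedBall (0 : QState n) 1).tendsto_subseq hfmem
    obtain ⟨N, hN⟩ := Metric.tendsto_atTop.mp hconv (ε / 2) (by linarith)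
    have hjl : φ N < φ (N + 1) := hφ (Nat.lt_succ_self N)
    refine ⟨φ (N + 1) - φ N, by omega, ?_⟩
    have hd : dist (f (φ (N + 1))) (f (φ N)) < ε := by
      have h1 := hN N (le_refl N)
      have h2 := hN (N + 1) (by omega)
      simp only [Function.comp_apply] at h1 h2
      calc dist (f (φ (N + 1))) (f (φ N))
          ≤ dist (f (φ (N + 1))) a + dist (f (φ N)) a := dist_triangle_right _ _ _
        _ < ε := by linarith
    have key : mApply (V ^ φ N) (mApply (V ^ (φ (N + 1) - φ N)) (A.qState z) - A.qState z)
        = f (φ (N + 1)) - f (φ N) := by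
      rw [mApply_sub, ← mApply_mul, ← pow_add, Nat.add_sub_cancel' (le_of_lt hjl)]
    calc ‖mApply (V ^ (φ (N + 1) - φ N)) (A.qState z) - A.qState z‖
        = ‖f (φ (N + 1)) - f (φ N)‖ := by
          rw [← key, mApply_norm_unitary (pow_mem hVu _)]
      _ < ε := by rwa [← dist_eq_norm]
  -- z is self reachable: contradiction
  apply hz
  refine ⟨repList y0 m, ?_, ?_⟩
  · obtain ⟨m', rfl⟩ : ∃ m', m = m' + 1 := ⟨m - 1, by omega⟩
    show repList y0 m' ++ y0 ≠ []
    intro hcon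
    exact hy0ne (List.append_eq_nil_iff.mp hcon).2
  · intro u
    have hs1 : A.sState (z ++ u) = u.foldl A.tr s := A.sState_append_s10 z u
    have hs2 : A.sState ((z ++ repList y0 m) ++ u) = u.foldl A.tr s := by
      rw [A.sState_append_s10, (hiter m).1]
    have hq1 : A.qState (z ++ u) = mApply (A.mword s u) (A.qState z) := A.qState_append_s10 z u
    have hq2 : A.qState ((z ++ repList y0 m) ++ u)
        = mApply (A.mword s u) (mApply (V ^ m) (A.qState z)) := by
      rw [A.qState_append_s10, (hiter m).1, (hiter m).2]
    have hdiff : |A.probAcc (z ++ u) - A.probAcc ((z ++ repList y0 m) ++ u)| < 2 * ε := by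
      unfold QFAC.probAcc
      rw [hs1, hs2, hq1, hq2]
      have hP := A.P_proj (u.foldl A.tr s)
      set P' := A.P (u.foldl A.tr s) with hP'
      set a := mApply P' (mApply (A.mword s u) (A.qState z)) with hadef
      set b := mApply P' (mApply (A.mword s u) (mApply (V ^ m) (A.qState z))) with hbdef
      have hWu := A.mword_unitary s u
      have ha : ‖a‖ ≤ 1 := by
        refine le_trans (mApply_norm_proj hP.1 hP.2 _) ?_
        rw [mApply_norm_unitary hWu, A.qState_norm]
      have hb : ‖b‖ ≤ 1 := by
        refine le_trans (mApply_norm_proj hP.1 hP.2 _) ?_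
        rw [mApply_norm_unitary hWu, mApply_norm_unitary (pow_mem hVu m), A.qState_norm]
      have hab : ‖a - b‖ < ε := by
        have e : a - b = mApply P' (mApply (A.mword s u)
            (A.qState z - mApply (V ^ m) (A.qState z))) := by
          rw [mApply_sub, mApply_sub]
        rw [e]
        calc ‖mApply P' (mApply (A.mword s u) (A.qState z - mApply (V ^ m) (A.qState z)))‖
            ≤ ‖mApply (A.mword s u) (A.qState z - mApply (V ^ m) (A.qState z))‖ :=
              mApply_norm_proj hP.1 hP.2 _
          _ = ‖A.qState z - mApply (V ^ m) (A.qState z)‖ := mApply_norm_unitary hWu _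
          _ < ε := by rw [norm_sub_rev]; exact hmε
      calc |‖a‖ ^ 2 - ‖b‖ ^ 2| ≤ 2 * ‖a - b‖ := norm_sq_diff_le a b ha hb
        _ < 2 * ε := by linarith
    rw [abs_lt] at hdiff
    constructor
    · intro hin
      by_contra hout
      have h1 := hrec.1 _ hin
      have h2 := hrec.2 _ hout
      linarith
    · intro hin
      by_contra hout
      have h1 := hrec.1 _ hin
      have h2 := hrec.2 _ hout
      linarith

end
end

section
/- For every integer h ≥ 1 and every prime p, with L = L(h,p): there exist strings u, v, x, y ∈ {0,1}* such that u ≢_L v, u·x ≡_L v, v·x ≡_L v, and v·y ≡_L u. (That is, the minimal DFA of L(h,p) contains the construction forbidden by MM-1QFA.) -/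
noncomputable section

/-- The blocks `1^a 0^b 1 0^h` with `a ≥ 0`, `b ≥ 1`; `true` = 1, `false` = 0. -/
def blockLang (h : ℕ) : Set (List Bool) :=
  {w | ∃ a b : ℕ, 1 ≤ b ∧
    w = List.replicate a true ++ List.replicate b false ++ [true] ++ List.replicate h false}

/-- Kleene star of a set of strings. -/
def kleeneStar (P : Set (List Bool)) : Set (List Bool) :=
  {x | ∃ l : List (List Bool), (∀ w ∈ l, w ∈ P) ∧ x = l.flatten}

/-- `L(h,p) = (1*00*10^h)* ∩ {w : |w| ≡ 0 (mod p)}`. -/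
def Lhp (h p : ℕ) : Set (List Bool) :=
  {w | w ∈ kleeneStar (blockLang h) ∧ w.length % p = 0}

/-!
The star `(1*00*10^h)*` is recognised by a DFA that parses it block by block, and two words are
`≡_L`-equivalent as soon as they drive this DFA to the same state and their lengths agree mod `p`.
Take `u = 1`, after which the DFA is reading the leading ones of a block, and `v = 1 0^p`, after
which it is reading the zeros; `u 0^p` is `v` itself. Then `x = 0^p` keeps `v` among the zeros,
and `y = 1 0^h 1 1^k` closes the block and returns to the leading ones, with `k` correcting the
length mod `p`. The suffix `1 0^h 1 1 1^j 0 1 0^h` separates `u` from `v`: after `v` its prefix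
`1 0^h` closes a block, while after `u` it ends among the zeros, so the next two ones are fatal.
-/

open List

abbrev block (h a b : ℕ) : List Bool :=
  replicate a true ++ replicate b false ++ [true] ++ replicate h false

/-- States of the parsing automaton of `(1*00*10^h)*`: `pending k` means that the middle `1` of a
block has been read and `k` more zeros are owed, so `pending 0` is the boundary between blocks. -/
inductive BlockState
  | ones
  | zeros
  | pending (k : ℕ)
  | dead

def blockStep (h : ℕ) : BlockState → Bool → BlockState
  | .pending 0, true => .ones
  | .pending 0, false => .zeros
  | .pending (_ + 1), true => .dead
  | .pending (k + 1), false => .pending k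
  | .ones, true => .ones
  | .ones, false => .zeros
  | .zeros, true => .pending h
  | .zeros, false => .zeros
  | .dead, _ => .dead

def blockDFA (h : ℕ) : DFA Bool BlockState := ⟨blockStep h, .pending 0, {.pending 0}⟩

namespace blockDFA

variable {h : ℕ}

@[simp]
lemma step_eq : (blockDFA h).step = blockStep h := rfl

@[simp]
lemma evalFrom_dead (w : List Bool) : (blockDFA h).evalFrom .dead w = .dead := by
  induction w with
  | nil => rfl
  | cons _ _ ih => exact ih

@[simp]
lemma evalFrom_ones_replicate_true (n : ℕ) :
    (blockDFA h).evalFrom .ones (replicate n true) = .ones := by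
  induction n with
  | zero => rfl
  | succ n ih => exact ih

@[simp]
lemma evalFrom_zeros_replicate_false (n : ℕ) :
    (blockDFA h).evalFrom .zeros (replicate n false) = .zeros := by
  induction n with
  | zero => rfl
  | succ n ih => exact ih

@[simp]
lemma evalFrom_pending_replicate_false (k : ℕ) :
    (blockDFA h).evalFrom (.pending k) (replicate k false) = .pending 0 := by
  induction k with
  | zero => rfl
  | succ k ih => exact ih

lemma evalFrom_block (a : ℕ) {b : ℕ} (hb : 1 ≤ b) :
    (blockDFA h).evalFrom (.pending 0) (block h a b) = .pending 0 := by
  obtain ⟨b, rfl⟩ := Nat.exists_eq_add_of_le' hb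
  cases a <;> simp [block, replicate_succ, DFA.evalFrom_of_append, blockStep]

lemma evalFrom_ones_replicate_false {n : ℕ} (hn : n ≠ 0) :
    (blockDFA h).evalFrom .ones (replicate n false) = .zeros := by
  obtain ⟨n, rfl⟩ := Nat.exists_eq_succ_of_ne_zero hn
  exact evalFrom_zeros_replicate_false n

lemma evalFrom_pending_zero_of_ne_nil {w : List Bool} (hne : w ≠ []) :
    (blockDFA h).evalFrom (.pending 0) w = (blockDFA h).evalFrom .ones w := by
  obtain ⟨c, w, rfl⟩ := exists_cons_of_ne_nil hne
  cases c <;> rfl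

lemma eq_replicate_append_of_evalFrom_pending {k : ℕ} {w : List Bool}
    (hw : (blockDFA h).evalFrom (.pending k) w = .pending 0) :
    ∃ r, w = replicate k false ++ r ∧ (blockDFA h).evalFrom (.pending 0) r = .pending 0 := by
  induction k generalizing w with
  | zero => exact ⟨w, rfl, hw⟩
  | succ k ih =>
    match w, hw with
    | false :: w, hw =>
      obtain ⟨r, rfl, hr⟩ := ih hw
      exact ⟨r, rfl, hr⟩
    | true :: w, hw => simp [blockStep] at hw

lemma eq_replicate_append_of_evalFrom_zeros {w : List Bool}
    (hw : (blockDFA h).evalFrom .zeros w = .pending 0) :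
    ∃ b r, w = replicate b false ++ true :: replicate h false ++ r ∧
      (blockDFA h).evalFrom (.pending 0) r = .pending 0 := by
  induction w with
  | nil => cases hw
  | cons c w ih =>
    cases c
    · obtain ⟨b, r, rfl, hr⟩ := ih hw
      exact ⟨b + 1, r, rfl, hr⟩
    · obtain ⟨r, rfl, hr⟩ := eq_replicate_append_of_evalFrom_pending hw
      exact ⟨0, r, rfl, hr⟩

lemma eq_block_append_of_evalFrom_ones {w : List Bool}
    (hw : (blockDFA h).evalFrom .ones w = .pending 0) :
    ∃ a b r, 1 ≤ b ∧ w = block h a b ++ r ∧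
      (blockDFA h).evalFrom (.pending 0) r = .pending 0 := by
  induction w with
  | nil => cases hw
  | cons c w ih =>
    cases c
    · obtain ⟨b, r, rfl, hr⟩ := eq_replicate_append_of_evalFrom_zeros hw
      exact ⟨0, b + 1, r, by omega, by simp [block, replicate_succ], hr⟩
    · obtain ⟨a, b, r, hb, rfl, hr⟩ := ih hw
      exact ⟨a + 1, b, r, hb, by simp [block, replicate_succ], hr⟩

end blockDFA

lemma mem_kleeneStar_blockLang_iff {h : ℕ} {w : List Bool} :
    w ∈ kleeneStar (blockLang h) ↔ (blockDFA h).evalFrom (.pending 0) w = .pending 0 := by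
  constructor
  · rintro ⟨l, hl, rfl⟩
    induction l with
    | nil => rfl
    | cons blk l ih =>
      obtain ⟨a, b, hb, rfl⟩ := hl blk mem_cons_self
      rw [flatten_cons, DFA.evalFrom_of_append, blockDFA.evalFrom_block a hb]
      exact ih fun w hw => hl w (mem_cons_of_mem _ hw)
  · induction hn : w.length using Nat.strong_induction_on generalizing w with
    | _ n ih =>
      intro hw
      rcases eq_or_ne w [] with rfl | hne
      · exact ⟨[], by simp, rfl⟩
      obtain ⟨a, b, r, hb, rfl, hr⟩ := blockDFA.eq_block_append_of_evalFrom_ones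
        (by rwa [← blockDFA.evalFrom_pending_zero_of_ne_nil hne])
      obtain ⟨l, hl, rfl⟩ := ih r.length 
        (by rw [← hn, length_append]; exact Nat.lt_add_of_pos_left (by simp)) rfl hr
      refine ⟨block h a b :: l, ?_, rfl⟩
      rintro w (_ | ⟨_, hw⟩)
      exacts [⟨a, b, hb, rfl⟩, hl w hw]

lemma mem_Lhp_iff {h p : ℕ} {w : List Bool} :
    w ∈ Lhp h p ↔ (blockDFA h).evalFrom (.pending 0) w = .pending 0 ∧ w.length % p = 0 :=
  and_congr_left' mem_kleeneStar_blockLang_iff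

lemma mnEquiv_Lhp_of_evalFrom_eq {h p : ℕ} {s t : List Bool} (q : ℕ)
    (he : (blockDFA h).evalFrom (.pending 0) s = (blockDFA h).evalFrom (.pending 0) t)
    (hl : s.length = t.length + p * q) : mnEquiv (Lhp h p) s t := by
  intro z
  rw [mem_Lhp_iff, mem_Lhp_iff, DFA.evalFrom_of_append, DFA.evalFrom_of_append, he,
    length_append, length_append, hl, Nat.add_right_comm, Nat.add_mul_mod_self_left]

lemma exists_add_eq_mul (m : ℕ) {p : ℕ} (hp : 0 < p) : ∃ k q, m + k = p * q := by
  obtain ⟨p, rfl⟩ := Nat.exists_eq_add_of_lt hp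
  exact ⟨p * m, m, by ring⟩

/-- For `h ≥ 1` and `p` prime, with `L = L(h,p)`, the minimal DFA of `L`
contains the construction forbidden by MM-1QFA: there are strings `u, v, x, y` with
`u ≢_L v`, `ux ≡_L v`, `vx ≡_L v`, and `vy ≡_L u`. -/
theorem stmt_12 (h p : ℕ) (hh : 1 ≤ h) (hp : p.Prime) :
    ∃ u v x y : List Bool,
      ¬ mnEquiv (Lhp h p) u v ∧
      mnEquiv (Lhp h p) (u ++ x) v ∧
      mnEquiv (Lhp h p) (v ++ x) v ∧
      mnEquiv (Lhp h p) (v ++ y) u := by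
  obtain ⟨k, q, hkq⟩ := exists_add_eq_mul (h + 2) hp.pos
  obtain ⟨j, r, hjr⟩ := exists_add_eq_mul (2 * h + 6) hp.pos
  have hones : (blockDFA h).evalFrom .ones (replicate p false) = .zeros :=
    blockDFA.evalFrom_ones_replicate_false hp.ne_zero
  refine ⟨[true], true :: replicate p false, replicate p false,
    true :: replicate h false ++ true :: replicate k true, ?_, fun _ => Iff.rfl, ?_, ?_⟩
  · set z := true :: replicate h false ++ true :: true :: replicate j true ++
      false :: true :: replicate h false
    have hvz : (true :: replicate p false) ++ z ∈ Lhp h p := by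
      refine mem_Lhp_iff.mpr ⟨by simp [z, DFA.evalFrom_of_append, blockStep, hones], ?_⟩
      refine Nat.mod_eq_zero_of_dvd ⟨r + 1, ?_⟩
      simp only [z, length_append, length_cons, length_replicate]
      linarith
    intro huv
    obtain ⟨h, rfl⟩ := Nat.exists_eq_add_of_le' hh
    simpa [z, mem_Lhp_iff, DFA.evalFrom_of_append, blockStep,
      blockDFA.evalFrom_ones_replicate_false (Nat.succ_ne_zero h)] using (huv z).mpr hvz
  · refine mnEquiv_Lhp_of_evalFrom_eq 1 ?_ ?_
    · rw [cons_append, DFA.evalFrom_cons, DFA.evalFrom_of_append]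
      simp [blockStep, hones]
    · simp only [length_append, length_cons, length_replicate]
      omega
  · refine mnEquiv_Lhp_of_evalFrom_eq (q + 1) ?_ ?_
    · simp [DFA.evalFrom_of_append, blockStep, hones]
    · simp only [length_append, length_cons, length_replicate, length_nil]
      linarith

end
end

section
/- For every integer h ≥ 1 and every prime p, every PFA over the alphabet {0,1} that recognizes L(h,p) with an isolated cut-point (i.e., with cut-point λ isolated by ε for some λ ∈ (0,1) and ε > 0) has at least p states. -/
/-! Choose a block `w` with `|w| ≡ 1 (mod p)`, so that `wᵏ ∈ L(h,p)` exactly when `p ∣ k`, and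
let `W` be the stochastic matrix of `w`. As a contraction for the sup norm, `W` has all its
eigenvalues in the closed unit disc, those on the unit circle are semisimple, and each of them is
a root of unity of order at most `n`. Hence `Wᵏ (1 - W^{n!}) → 0`. If `p > n`, then `p ∤ n!`, so
`w^{pt} ∈ L(h,p)` and `w^{pt + n!} ∉ L(h,p)` for every `t`: their acceptance probabilities differ
by at least `2ε`, yet the difference is `ρ Wᵖᵗ (1 - W^{n!}) η_F → 0`. -/

noncomputable section

/-- A PFA with `n` states: an initial distribution, a row-stochastic matrix for each
letter, and a set of accepting states. -/
structure PFA (Alph : Type) (n : ℕ) where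
  ρ : Fin n → ℝ
  ρ_nonneg : ∀ i, 0 ≤ ρ i
  ρ_sum : ∑ i, ρ i = 1
  M : Alph → Matrix (Fin n) (Fin n) ℝ
  M_nonneg : ∀ σ i j, 0 ≤ M σ i j
  M_stochastic : ∀ σ i, ∑ j, M σ i j = 1
  F : Finset (Fin n)

namespace PFA
variable {Alph : Type} {n : ℕ}

/-- `ρ M(σ₁) ⋯ M(σ_m) η_F`. -/
def probAcc (A : PFA Alph n) (x : List Alph) : ℝ :=
  dotProduct (x.foldl (fun v σ => Matrix.vecMul v (A.M σ)) A.ρ)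
    (fun i => if i ∈ A.F then 1 else 0)

def Recognizes (A : PFA Alph n) (L : Set (List Alph)) (lam ε : ℝ) : Prop :=
  (∀ x ∈ L, lam + ε ≤ A.probAcc x) ∧ (∀ x ∉ L, A.probAcc x ≤ lam - ε)

end PFA

open Filter Topology Matrix Module
open scoped Nat

lemma eq_of_sum_smul_eq_of_norm_le {F ι : Type*} [NormedAddCommGroup F] [InnerProductSpace ℝ F]
    [Fintype ι] {w : ι → ℝ} {v : ι → F} {u : F} (hw : ∀ j, 0 ≤ w j) (hw1 : ∑ j, w j = 1)
    (hu : ∑ j, w j • v j = u) (hv : ∀ j, ‖v j‖ ≤ ‖u‖) {j : ι} (hj : w j ≠ 0) : v j = u := by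
  have hle : ∀ j, ‖u - v j‖ ^ 2 ≤ 2 * inner ℝ u (u - v j) := fun j => by
    have := pow_le_pow_left₀ (norm_nonneg _) (hv j) 2
    rw [norm_sub_sq_real, inner_sub_right, real_inner_self_eq_norm_sq]
    linarith
  have hsum : ∑ j, w j * inner ℝ u (u - v j) = 0 := by
    simp_rw [← inner_smul_right, ← inner_sum, smul_sub, Finset.sum_sub_distrib, ← Finset.sum_smul,
      hw1, one_smul, hu, sub_self, inner_zero_right]
  have hterm_nonneg : ∀ j ∈ Finset.univ, 0 ≤ w j * ‖u - v j‖ ^ 2 :=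
    fun j _ => mul_nonneg (hw j) (sq_nonneg _)
  have hzero : ∑ j, w j * ‖u - v j‖ ^ 2 = 0 := by
    refine le_antisymm ?_ (Finset.sum_nonneg hterm_nonneg)
    calc ∑ j, w j * ‖u - v j‖ ^ 2 ≤ ∑ j, 2 * (w j * inner ℝ u (u - v j)) :=
          Finset.sum_le_sum fun j _ => by nlinarith [hle j, hw j]
      _ = 0 := by rw [← Finset.mul_sum, hsum, mul_zero]
  have := (Finset.sum_eq_zero_iff_of_nonneg hterm_nonneg).1 hzero j (Finset.mem_univ j)
  simpa [hj, sub_eq_zero, eq_comm] using this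

section Contraction

variable {𝕜 E : Type*} [RCLike 𝕜] [NormedAddCommGroup E] [NormedSpace 𝕜 E] {g : End 𝕜 E}
  {μ : 𝕜}

lemma norm_pow_apply_le_of_norm_apply_le (hg : ∀ x, ‖g x‖ ≤ ‖x‖) (k : ℕ) (x : E) :
    ‖(g ^ k) x‖ ≤ ‖x‖ := by
  induction k with
  | zero => simp
  | succ k ih => rw [pow_succ', End.mul_apply]; exact (hg _).trans ih

lemma norm_le_one_of_hasEigenvalue (hg : ∀ x, ‖g x‖ ≤ ‖x‖) (hμ : g.HasEigenvalue μ) :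
    ‖μ‖ ≤ 1 := by
  obtain ⟨x, hx⟩ := hμ.exists_hasEigenvector
  have h := hg x
  rw [hx.apply_eq_smul, norm_smul] at h
  exact le_of_mul_le_mul_right (by simpa using h) (norm_pos_iff.2 hx.2)

/-- On the unit circle a contraction has no Jordan blocks: along one, `g ^ k` would grow
like `k`. -/
lemma apply_eq_smul_of_sq_apply_eq_zero (hg : ∀ x, ‖g x‖ ≤ ‖x‖) (hμ : ‖μ‖ = 1) {x : E}
    (hx : ((g - μ • (1 : End 𝕜 E)) ^ 2) x = 0) : g x = μ • x := by
  set y := (g - μ • 1) x with hy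
  have hgy : g y = μ • y := by
    have : (g - μ • 1) y = 0 := by rw [hy, ← End.mul_apply, ← sq, hx]
    simpa [sub_eq_zero] using this
  have hgx : g x = μ • x + y := by simp [hy]
  have hpow : ∀ k : ℕ, (g ^ (k + 1)) x = μ ^ (k + 1) • x + (((k + 1 : ℕ) : 𝕜) * μ ^ k) • y := by
    intro k
    induction k with
    | zero => simpa using hgx
    | succ k ih =>
      rw [pow_succ', End.mul_apply, ih, map_add, map_smul, map_smul, hgx, hgy]
      push_cast
      module
  have hbound : ∀ k : ℕ, ((k + 1 : ℕ) : ℝ) * ‖y‖ ≤ 2 * ‖x‖ := by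
    intro k
    have h := norm_sub_le ((g ^ (k + 1)) x) (μ ^ (k + 1) • x)
    rw [hpow k, add_sub_cancel_left, norm_smul, norm_mul, norm_pow, hμ, one_pow, mul_one,
      RCLike.norm_natCast, ← hpow k, norm_smul, norm_pow, hμ, one_pow, one_mul] at h
    linarith [norm_pow_apply_le_of_norm_apply_le hg (k + 1) x]
  suffices y = 0 by simpa [sub_eq_zero, hy] using this
  by_contra hy0
  obtain ⟨k, hk⟩ := exists_nat_gt (2 * ‖x‖ / ‖y‖)
  rw [div_lt_iff₀ (norm_pos_iff.2 hy0)] at hk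
  have := hbound k
  push_cast at this
  nlinarith [norm_nonneg y]

lemma apply_eq_smul_of_mem_maxGenEigenspace (hg : ∀ x, ‖g x‖ ≤ ‖x‖) (hμ : ‖μ‖ = 1) {x : E}
    (hx : x ∈ g.maxGenEigenspace μ) : g x = μ • x := by
  set f := g - μ • (1 : End 𝕜 E) with hf
  have hker : LinearMap.ker (f ^ 1) = LinearMap.ker (f ^ (1 : ℕ).succ) := by
    ext y
    simp only [LinearMap.mem_ker, pow_one]
    refine ⟨fun hy => by rw [pow_succ, End.mul_apply, pow_one, hy, map_zero], fun hy => ?_⟩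
    simpa [hf, sub_eq_zero] using apply_eq_smul_of_sq_apply_eq_zero hg hμ hy
  obtain ⟨m, hm⟩ := (g.mem_maxGenEigenspace μ x).1 hx
  have : x ∈ LinearMap.ker (f ^ (1 + m)) := by
    rw [LinearMap.mem_ker, pow_add, End.mul_apply, hm, map_zero]
  rw [← End.ker_pow_constant hker m, LinearMap.mem_ker, pow_one] at this
  simpa [hf, sub_eq_zero] using this

end Contraction

lemma tendsto_choose_mul_pow_sub (j : ℕ) {r : ℝ} (hr₀ : 0 ≤ r) (hr₁ : r < 1) :
    Tendsto (fun k : ℕ => (k.choose j : ℝ) * r ^ (k - j)) atTop (𝓝 0) := by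
  rcases hr₀.eq_or_lt with rfl | hr₀
  · refine tendsto_const_nhds.congr' ?_
    filter_upwards [eventually_gt_atTop j] with k hk
    rw [zero_pow (by omega), mul_zero]
  have h := (tendsto_pow_const_mul_const_pow_of_lt_one j hr₀.le hr₁).mul_const (r ^ j)⁻¹
  rw [zero_mul] at h
  refine squeeze_zero' (Eventually.of_forall fun k => by positivity) ?_ h
  filter_upwards [eventually_ge_atTop j] with k hk
  rw [mul_assoc, pow_sub₀ _ hr₀.ne' hk]
  gcongr
  exact_mod_cast Nat.choose_le_pow k j

lemma pow_apply_eq_sum_range {R M : Type*} [CommRing R] [AddCommGroup M] [Module R M]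
    {g : End R M} {μ : R} {m : ℕ} {x : M} (hm : ((g - μ • 1) ^ m) x = 0) (k : ℕ) :
    (g ^ k) x = ∑ j ∈ Finset.range m, ((k.choose j : R) * μ ^ (k - j)) • ((g - μ • 1) ^ j) x := by
  set a := g - μ • (1 : End R M)
  have hbin : (g ^ k) x =
      ∑ j ∈ Finset.range (k + 1), ((k.choose j : R) * μ ^ (k - j)) • (a ^ j) x := by
    rw [show g = a + μ • 1 by simp [a], ((Commute.one_right a).smul_right μ).add_pow,
      LinearMap.sum_apply]
    refine Finset.sum_congr rfl fun j _ => ?_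
    simp [smul_pow, mul_smul, mul_comm, Nat.cast_smul_eq_nsmul]
  have hk : Finset.range (k + 1) ⊆ Finset.range (k + 1 + m) := by simp
  have hm' : Finset.range m ⊆ Finset.range (k + 1 + m) := by simp
  rw [hbin, Finset.sum_subset hk, ← Finset.sum_subset hm']
  · intro j _ hj
    have : m ≤ j := by simpa using hj
    rw [← Nat.sub_add_cancel this, pow_add, End.mul_apply, hm, map_zero, smul_zero]
  · intro j _ hj
    have : k < j := by simpa using hj
    rw [Nat.choose_eq_zero_of_lt this, Nat.cast_zero, zero_mul, zero_smul]

lemma tendsto_pow_apply_of_mem_maxGenEigenspace {𝕜 E : Type*} [NormedField 𝕜]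
    [NormedAddCommGroup E] [NormedSpace 𝕜 E] {g : End 𝕜 E} {μ : 𝕜} (hμ : ‖μ‖ < 1) {x : E}
    (hx : x ∈ g.maxGenEigenspace μ) : Tendsto (fun k => (g ^ k) x) atTop (𝓝 0) := by
  obtain ⟨m, hm⟩ := (g.mem_maxGenEigenspace μ x).1 hx
  have hcoeff : ∀ j, Tendsto (fun k : ℕ => (k.choose j : 𝕜) * μ ^ (k - j)) atTop (𝓝 0) := by
    refine fun j => squeeze_zero_norm (fun k => ?_)
      (tendsto_choose_mul_pow_sub j (norm_nonneg μ) hμ)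
    rw [norm_mul, norm_pow]
    gcongr
    simpa using Nat.norm_cast_le (α := 𝕜) (k.choose j)
  simp_rw [pow_apply_eq_sum_range hm]
  simpa using tendsto_finsetSum (Finset.range m) fun j _ =>
    (hcoeff j).smul_const (((g - μ • 1) ^ j) x)

lemma hasEigenvalue_of_mem_maxGenEigenspace {R M : Type*} [CommRing R] [AddCommGroup M]
    [Module R M] {g : End R M} {μ : R} {x : M} (hx : x ∈ g.maxGenEigenspace μ) (hx0 : x ≠ 0) :
    g.HasEigenvalue μ :=
  (End.hasUnifEigenvalue_iff_hasUnifEigenvalue_one (by simp)).1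
    ((Submodule.ne_bot_iff _).2 ⟨x, hx, hx0⟩)

theorem tendsto_pow_apply_sub_pow_add_apply {E : Type*} [NormedAddCommGroup E]
    [NormedSpace ℂ E] [FiniteDimensional ℂ E] {g : End ℂ E} (hg : ∀ x, ‖g x‖ ≤ ‖x‖) {N : ℕ}
    (hN : ∀ μ, g.HasEigenvalue μ → ‖μ‖ = 1 → μ ^ N = 1) (x : E) :
    Tendsto (fun k => (g ^ k) x - (g ^ (k + N)) x) atTop (𝓝 0) := by
  have hx : x ∈ ⨆ μ, g.maxGenEigenspace μ := by
    rw [End.iSup_maxGenEigenspace_eq_top]; trivial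
  induction hx using Submodule.iSup_induction' with
  | mem μ z hz =>
    by_cases hμ : ‖μ‖ < 1
    · have h := tendsto_pow_apply_of_mem_maxGenEigenspace hμ hz
      simpa using h.sub ((tendsto_add_atTop_iff_nat N).2 h)
    by_cases hz0 : z = 0
    · simp [hz0]
    have hμ1 : ‖μ‖ = 1 :=
      le_antisymm (norm_le_one_of_hasEigenvalue hg (hasEigenvalue_of_mem_maxGenEigenspace hz hz0))
        (not_lt.1 hμ)
    have hvec : g.HasEigenvector μ z :=
      ⟨End.mem_eigenspace_iff.2 (apply_eq_smul_of_mem_maxGenEigenspace hg hμ1 hz), hz0⟩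
    simp [hvec.pow_apply, pow_add, hN μ (End.hasEigenvalue_of_hasEigenvector hvec) hμ1]
  | zero => simp
  | add y z _ _ hy hz => simpa [sub_add_sub_comm] using hy.add hz

namespace Matrix

variable {ι : Type*} [Fintype ι]

lemma map_ofReal_mulVec_apply (M : Matrix ι ι ℝ) (z : ι → ℂ) (i : ι) :
    (M.map (↑) *ᵥ z) i = ∑ j, M i j • z j := by
  simp [mulVec, dotProduct, Complex.real_smul]

variable [DecidableEq ι] {M : Matrix ι ι ℝ}

lemma norm_map_ofReal_mulVec_le (hM : M ∈ rowStochastic ℝ ι) (z : ι → ℂ) :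
    ‖M.map (↑) *ᵥ z‖ ≤ ‖z‖ := by
  refine (pi_norm_le_iff_of_nonneg (norm_nonneg z)).2 fun i => ?_
  calc ‖(M.map (↑) *ᵥ z) i‖ ≤ ∑ j, M i j * ‖z‖ := by
        rw [map_ofReal_mulVec_apply]
        refine (norm_sum_le _ _).trans (Finset.sum_le_sum fun j _ => ?_)
        rw [norm_smul, Real.norm_of_nonneg (hM.1 i j)]
        exact mul_le_mul_of_nonneg_left (norm_le_pi_norm z j) (hM.1 i j)
    _ = ‖z‖ := by rw [← Finset.sum_mul, sum_row_of_mem_rowStochastic hM, one_mul]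

/-- Starting from a coordinate where `|v|` is maximal and following positive entries of `M`,
each step multiplies the coordinate by `μ`; the walk must revisit a state within `card ι`
steps. -/
lemma exists_pow_eq_one_of_map_ofReal_mulVec_eq_smul (hM : M ∈ rowStochastic ℝ ι) {μ : ℂ}
    (hμ : ‖μ‖ = 1) {v : ι → ℂ} (hv : M.map (↑) *ᵥ v = μ • v) (hv0 : v ≠ 0) :
    ∃ d, 0 < d ∧ d ≤ Fintype.card ι ∧ μ ^ d = 1 := by
  have hstep : ∀ i, ‖v i‖ = ‖v‖ → ∀ j, M i j ≠ 0 → v j = μ * v i := by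
    intro i hi j hj
    refine eq_of_sum_smul_eq_of_norm_le (fun j => hM.1 i j) (sum_row_of_mem_rowStochastic hM i)
      ?_ (fun j => ?_) hj
    · rw [← map_ofReal_mulVec_apply, hv, Pi.smul_apply, smul_eq_mul]
    · rw [norm_mul, hμ, one_mul, hi]
      exact norm_le_pi_norm v j
  obtain ⟨i₀, hi₀⟩ : ∃ i₀, ‖v i₀‖ = ‖v‖ := by
    obtain ⟨j, hj⟩ := Function.ne_iff.1 hv0
    have : Nonempty ι := ⟨j⟩
    obtain ⟨i₀, hmax⟩ := Finite.exists_max fun i => ‖v i‖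
    exact ⟨i₀, le_antisymm (norm_le_pi_norm v i₀)
      ((pi_norm_le_iff_of_nonneg (norm_nonneg _)).2 hmax)⟩
  choose nxt hnxt using fun i => Finset.exists_ne_zero_of_sum_ne_zero
    (by rw [sum_row_of_mem_rowStochastic hM i]; exact one_ne_zero : ∑ j, M i j ≠ 0)
  have horbit : ∀ t, ‖v (nxt^[t] i₀)‖ = ‖v‖ ∧ v (nxt^[t] i₀) = μ ^ t * v i₀ := by
    intro t
    induction t with
    | zero => simp [hi₀]
    | succ t ih =>
      rw [Function.iterate_succ_apply', hstep _ ih.1 _ (hnxt _).2, ih.2]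
      exact ⟨by rw [← ih.2, norm_mul, hμ, one_mul, ih.1], by ring⟩
  have hv₀ : v i₀ ≠ 0 := by
    rw [← norm_ne_zero_iff, hi₀, norm_ne_zero_iff]; exact hv0
  have hμ₀ : μ ≠ 0 := by rw [← norm_ne_zero_iff, hμ]; exact one_ne_zero
  obtain ⟨s, t, hne, heq⟩ := Fintype.exists_ne_map_eq_of_card_lt
    (fun t : Fin (Fintype.card ι + 1) => nxt^[t] i₀) (by simp)
  wlog hst : s < t generalizing s t
  · exact this t s hne.symm heq.symm (lt_of_le_of_ne (not_lt.1 hst) hne.symm)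
  have hpow : μ ^ (s : ℕ) = μ ^ (t : ℕ) :=
    mul_right_cancel₀ hv₀ (by rw [← (horbit s).2, ← (horbit t).2]; exact congrArg v heq)
  refine ⟨t - s, Nat.sub_pos_of_lt hst, by omega, ?_⟩
  rw [pow_sub₀ μ hμ₀ hst.le, hpow, mul_inv_cancel₀ (pow_ne_zero _ hμ₀)]

lemma pow_factorial_card_eq_one (hM : M ∈ rowStochastic ℝ ι) {μ : ℂ} (hμ : ‖μ‖ = 1)
    {v : ι → ℂ} (hv : M.map (↑) *ᵥ v = μ • v) (hv0 : v ≠ 0) :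
    μ ^ (Fintype.card ι)! = 1 := by
  obtain ⟨d, hd₀, hd, hμd⟩ := exists_pow_eq_one_of_map_ofReal_mulVec_eq_smul hM hμ hv hv0
  obtain ⟨q, hq⟩ := Nat.dvd_factorial hd₀ hd
  rw [hq, pow_mul, hμd, one_pow]

theorem tendsto_pow_mulVec_sub_pow_add_mulVec (hM : M ∈ rowStochastic ℝ ι) (y : ι → ℝ) :
    Tendsto (fun k => M ^ k *ᵥ y - M ^ (k + (Fintype.card ι)!) *ᵥ y) atTop (𝓝 0) := by
  set g : End ℂ (ι → ℂ) := toLin' (M.map (↑))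
  have hN : ∀ μ, g.HasEigenvalue μ → ‖μ‖ = 1 → μ ^ (Fintype.card ι)! = 1 := by
    intro μ hμ hμ1
    obtain ⟨v, hv⟩ := hμ.exists_hasEigenvector
    exact pow_factorial_card_eq_one hM hμ1 hv.apply_eq_smul hv.2
  have h := tendsto_pow_apply_sub_pow_add_apply (norm_map_ofReal_mulVec_le hM) hN
    (fun i => (y i : ℂ))
  have hg : ∀ k, (g ^ k) (fun i => (y i : ℂ)) = fun i => ((M ^ k *ᵥ y) i : ℂ) := by
    intro k
    ext i
    rw [← toLin'_pow, toLin'_apply, show M.map (↑) ^ k = (M ^ k).map Complex.ofRealHom from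
      (M.map_pow Complex.ofRealHom k).symm]
    exact (Complex.ofRealHom.map_mulVec (M ^ k) y i).symm
  refine tendsto_pi_nhds.2 fun i => ?_
  simpa [hg, Function.comp_def] using (Complex.continuous_re.tendsto 0).comp (tendsto_pi_nhds.1 h i)

end Matrix

namespace PFA

variable {Alph : Type} {n : ℕ} (A : PFA Alph n)

/-- The vector `η_F`. -/
def acceptVec : Fin n → ℝ := fun i => if i ∈ A.F then 1 else 0

lemma foldl_vecMul_eq_vecMul_prod (x : List Alph) (v : Fin n → ℝ) :
    x.foldl (fun v σ => v ᵥ* A.M σ) v = v ᵥ* (x.map A.M).prod := by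
  induction x generalizing v with
  | nil => simp
  | cons σ x ih => rw [List.foldl_cons, ih, List.map_cons, List.prod_cons, vecMul_vecMul]

lemma probAcc_eq_dotProduct_mulVec (x : List Alph) :
    A.probAcc x = A.ρ ⬝ᵥ ((x.map A.M).prod *ᵥ A.acceptVec) := by
  rw [probAcc, foldl_vecMul_eq_vecMul_prod, ← dotProduct_mulVec]
  rfl

lemma prod_map_M_mem_rowStochastic (x : List Alph) :
    (x.map A.M).prod ∈ rowStochastic ℝ (Fin n) :=
  Submonoid.list_prod_mem _ fun _ hM => by
    obtain ⟨σ, -, rfl⟩ := List.mem_map.1 hM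
    exact mem_rowStochastic_iff_sum.2 ⟨A.M_nonneg σ, A.M_stochastic σ⟩

lemma probAcc_flatten_replicate (w : List Alph) (k : ℕ) :
    A.probAcc (List.replicate k w).flatten = A.ρ ⬝ᵥ ((w.map A.M).prod ^ k *ᵥ A.acceptVec) := by
  rw [probAcc_eq_dotProduct_mulVec, List.map_flatten, List.prod_flatten, List.map_replicate,
    List.map_replicate, List.prod_replicate]

end PFA

lemma exists_mem_blockLang_length_modEq (h : ℕ) {p : ℕ} (hp : 0 < p) :
    ∃ w ∈ blockLang h, w.length ≡ 1 [MOD p] := by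
  have hlt := Nat.mod_lt h hp
  refine ⟨_, ⟨0, p - h % p, by omega, rfl⟩, ?_⟩
  have hlen : p - h % p + (h + 1) = p * (h / p + 1) + 1 := by
    have := Nat.mod_add_div h p
    rw [mul_add, mul_one]; omega
  simp [Nat.ModEq, hlen]

lemma flatten_replicate_mem_Lhp_iff {h p : ℕ} {w : List Bool} (hw : w ∈ blockLang h)
    (hlen : w.length ≡ 1 [MOD p]) (k : ℕ) :
    (List.replicate k w).flatten ∈ Lhp h p ↔ p ∣ k := by
  have hstar : (List.replicate k w).flatten ∈ kleeneStar (blockLang h) :=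
    ⟨_, fun u hu => (List.eq_of_mem_replicate hu).symm ▸ hw, rfl⟩
  have hmod : (List.replicate k w).flatten.length ≡ k [MOD p] := by
    simpa [List.length_flatten, List.sum_replicate] using hlen.mul_left k
  simp only [Lhp, Set.mem_ofPred_eq, hstar, true_and, ← Nat.dvd_iff_mod_eq_zero]
  exact hmod.dvd_iff dvd_rfl

theorem stmt_15_general (h p : ℕ) (hp : p.Prime) (n : ℕ) (A : PFA Bool n)
    (lam ε : ℝ) (hε : 0 < ε)
    (hrec : A.Recognizes (Lhp h p) lam ε) :
    p ≤ n := by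
  by_contra! hnp
  obtain ⟨w, hw, hlen⟩ := exists_mem_blockLang_length_modEq h hp.pos
  set W := (w.map A.M).prod
  have hN : ¬ p ∣ n ! := by rw [hp.dvd_factorial]; omega
  have hgap : ∀ t, 2 * ε ≤
      A.ρ ⬝ᵥ (W ^ (p * t) *ᵥ A.acceptVec - W ^ (p * t + n !) *ᵥ A.acceptVec) := by
    intro t
    have hin := hrec.1 _ ((flatten_replicate_mem_Lhp_iff hw hlen _).2 (dvd_mul_right p t))
    have hout := hrec.2 _ (mt (flatten_replicate_mem_Lhp_iff hw hlen _).1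
      (by rwa [Nat.dvd_add_right (dvd_mul_right p t)]))
    rw [A.probAcc_flatten_replicate] at hin hout
    rw [dotProduct_sub]
    linarith
  have hW := tendsto_pow_mulVec_sub_pow_add_mulVec (A.prod_map_M_mem_rowStochastic w) A.acceptVec
  rw [Fintype.card_fin] at hW
  have hlim := ((continuous_const (y := A.ρ) |>.dotProduct continuous_id).tendsto 0).comp
    (hW.comp (strictMono_mul_left_of_pos hp.pos).tendsto_atTop)
  rw [id, dotProduct_zero] at hlim
  linarith [ge_of_tendsto' hlim hgap]

/-- For every `h ≥ 1` and prime `p`, every PFA over `{0,1}` that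
recognizes `L(h,p)` with an isolated cut-point has at least `p` states. -/
theorem stmt_15 (h p : ℕ) (hh : 1 ≤ h) (hp : p.Prime) (n : ℕ) (A : PFA Bool n)
    (lam ε : ℝ) (hlam : 0 < lam ∧ lam < 1) (hε : 0 < ε)
    (hrec : A.Recognizes (Lhp h p) lam ε) :
    p ≤ n :=
  stmt_15_general h p hp n A lam ε hε hrec

end
end
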